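/- With notation as in the construction: S a semigroup, {X_g}_{g∈S} an injective family contained in a set with the overlap property, H = F(b₁,b₂)/ξ where ξ is the congruence generated by {(X_h, X_{h'}X_{h''}) : h = h'h'' in S}, and H_S the subsemigroup of F(b₁,b₂) generated by {X_g}. If a word W over {b₁,b₂} is ξ-congruent to a word U lying in H_S, then W itself lies in H_S (i.e., W is a product of words X_g). -/

import Mathlib

/-!
Over a set of words with the overlap property, factorisations into words of the set are rigid:
an occurrence of such a word inside a product of such words is one of the factors. So for the
language `C∗` of all products of the words `X_g`, both `A X_h B ∈ C∗` and `A X_{h'} X_{h''} B ∈ C∗`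
just say `A, B ∈ C∗`. Hence every defining relation, and with it `ξ`, is contained in the
syntactic congruence of `C∗`; with empty context this says that `H_S` is a union of `ξ`-classes.
-/

/-- A set of words satisfies the overlap property if (1) no element is a proper subword of
another and (2) whenever `Y ≡ UV` and `Z ≡ WU` with `U` nonempty, `Y ≡ U ≡ Z`. -/
def OverlapProp {α : Type*} (M : Set (List α)) : Prop :=
  (∀ Y ∈ M, ∀ Z ∈ M, Y <:+: Z → Y = Z) ∧
  (∀ Y ∈ M, ∀ Z ∈ M, ∀ U V W : List α, U ≠ [] → Y = U ++ V → Z = W ++ U →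
    U = Y ∧ U = Z)

/-- The word (nonempty list of letters) corresponding to an element of a free semigroup. -/
def FSword {α : Type*} (x : FreeSemigroup α) : List α := x.head :: x.tail

/-- The defining relations `X_h = X_{h'} X_{h''}` for `h = h'h''` in `S`, as a relation on
the free semigroup `F(b₁,b₂)`. -/
def defRel {S : Type*} [Semigroup S] (X : S → FreeSemigroup (Fin 2)) :
    FreeSemigroup (Fin 2) → FreeSemigroup (Fin 2) → Prop := fun x y =>
  ∃ h h' h'' : S, h = h' * h'' ∧ x = X h ∧ y = X h' * X h''

open Computability

section

variable {α ι : Type*}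

lemma FSword_mul (x y : FreeSemigroup α) : FSword (x * y) = FSword x ++ FSword y := rfl

lemma FSword_ne_nil (x : FreeSemigroup α) : FSword x ≠ [] := List.cons_ne_nil _ _

lemma FSword_injective : Function.Injective (FSword (α := α)) := by
  rintro ⟨a, s⟩ ⟨b, t⟩ h
  simpa [FSword, FreeSemigroup.ext_iff] using h

lemma OverlapProp.mono {M N : Set (List α)} (hM : OverlapProp M) (hNM : N ⊆ M) :
    OverlapProp N :=
  ⟨fun Y hY Z hZ => hM.1 Y (hNM hY) Z (hNM hZ),
    fun Y hY Z hZ => hM.2 Y (hNM hY) Z (hNM hZ)⟩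

/-- If a word `c` of `M` begins inside another word `c₀ = A ++ U` of `M`, it begins where
`c₀` does and equals it. -/
lemma OverlapProp.eq_of_overlap {M : Set (List α)} (hM : OverlapProp M) {c₀ c A U B R : List α}
    (hc₀ : c₀ ∈ M) (hc : c ∈ M) (hU : U ≠ []) (h₀ : c₀ = A ++ U) (h : c ++ B = U ++ R) :
    A = [] ∧ c = c₀ := by
  rcases List.prefix_or_prefix_of_prefix ⟨R, h.symm⟩ (List.prefix_append c B) with
    ⟨V, hUc⟩ | ⟨V, hcU⟩
  · obtain ⟨hUc', hUc₀⟩ := hM.2 c hc c₀ hc₀ U V A hU hUc.symm h₀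
    subst hUc₀
    exact ⟨List.append_left_eq_self.1 h₀.symm, hUc'.symm⟩
  · have hcc₀ : c = c₀ := hM.1 c hc c₀ hc₀ ⟨A, V, by rw [h₀, ← hcU, List.append_assoc]⟩
    refine ⟨?_, hcc₀⟩
    have hlen := congrArg List.length h₀
    rw [← hcU, ← hcc₀] at hlen
    simp only [List.length_append] at hlen
    exact List.length_eq_zero_iff.1 (by omega)

lemma Language.append_mem_kstar {l : Language α} {x y : List α} (hx : x ∈ l∗) (hy : y ∈ l∗) :
    x ++ y ∈ l∗ := by
  rw [← kstar_mul_kstar l]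
  exact ⟨x, hx, y, hy, rfl⟩

lemma Language.mem_kstar_of_mem {l : Language α} {x : List α} (hx : x ∈ l) : x ∈ l∗ :=
  (le_kstar : l ≤ l∗) hx

lemma OverlapProp.append_append_mem_kstar_iff {C : Language α} (hC : OverlapProp (C : Set _))
    (hne : [] ∉ C) {A c B : List α} (hc : c ∈ C) :
    A ++ c ++ B ∈ C∗ ↔ A ∈ C∗ ∧ B ∈ C∗ := by
  refine ⟨fun h => ?_, fun ⟨hA, hB⟩ =>
    Language.append_mem_kstar (Language.append_mem_kstar hA (Language.mem_kstar_of_mem hc)) hB⟩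
  obtain ⟨L, hL, hLC⟩ := Language.mem_kstar.1 h
  clear h
  induction L generalizing A with
  | nil =>
    simp only [List.flatten_nil, List.append_eq_nil_iff] at hL
    exact absurd (hL.1.2 ▸ hc) hne
  | cons c₀ L ih =>
    have hc₀ : c₀ ∈ C := hLC c₀ List.mem_cons_self
    have hLC' : ∀ y ∈ L, y ∈ C := fun y hy => hLC y (List.mem_cons_of_mem _ hy)
    rw [List.flatten_cons, List.append_assoc] at hL
    rcases List.append_eq_append_iff.1 hL with ⟨U, hA, hU⟩ | ⟨bs, hA, hbs⟩
    · rcases eq_or_ne U [] with rfl | hU_ne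
      · rw [List.append_nil] at hA
        subst hA
        exact ⟨Language.mem_kstar_of_mem hc₀, (ih (A := []) (by simpa using hU) hLC').2⟩
      · obtain ⟨rfl, rfl⟩ := hC.eq_of_overlap hc₀ hc hU_ne hA hU
        rw [List.nil_append] at hA
        subst hA
        exact ⟨Language.nil_mem_kstar C, List.append_cancel_left hU ▸ Language.join_mem_kstar hLC'⟩
    · subst hA
      obtain ⟨hbs, hB⟩ := ih (by rw [hbs, List.append_assoc]) hLC'
      exact ⟨Language.append_mem_kstar (Language.mem_kstar_of_mem hc₀) hbs, hB⟩

def Language.syntacticCon (L : Language α) : Con (FreeSemigroup α) where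
  r x y := ∀ A B : List α, A ++ FSword x ++ B ∈ L ↔ A ++ FSword y ++ B ∈ L
  iseqv := ⟨fun _ _ _ => Iff.rfl, fun h A B => (h A B).symm,
    fun h₁ h₂ A B => (h₁ A B).trans (h₂ A B)⟩
  mul' {a b c d} hab hcd A B := by
    have h₁ := hcd (A ++ FSword a) B
    have h₂ := hab A (FSword d ++ B)
    simp only [FSword_mul, List.append_assoc] at h₁ h₂ ⊢
    exact h₁.trans h₂

def codeLanguage (X : ι → FreeSemigroup α) : Language α := Set.range fun g => FSword (X g)

lemma nil_notMem_codeLanguage (X : ι → FreeSemigroup α) : [] ∉ codeLanguage X := by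
  rintro ⟨g, hg⟩
  exact FSword_ne_nil (X g) hg

lemma mem_closure_range_iff_FSword_mem_kstar {X : ι → FreeSemigroup α} {u : FreeSemigroup α} :
    u ∈ Subsemigroup.closure (Set.range X) ↔ FSword u ∈ (codeLanguage X)∗ := by
  constructor
  · intro hu
    induction hu using Subsemigroup.closure_induction with
    | mem x hx =>
      obtain ⟨g, rfl⟩ := hx
      exact Language.mem_kstar_of_mem ⟨g, rfl⟩
    | mul x y _ _ hx hy => exact Language.append_mem_kstar hx hy
  · intro hu
    obtain ⟨L, hL, hLC⟩ := Language.mem_kstar.1 hu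
    clear hu
    induction L generalizing u with
    | nil => exact absurd hL (FSword_ne_nil u)
    | cons y L ih =>
      obtain ⟨g, rfl⟩ := hLC y List.mem_cons_self
      have hXg : X g ∈ Subsemigroup.closure (Set.range X) := Subsemigroup.subset_closure ⟨g, rfl⟩
      rw [List.flatten_cons] at hL
      rcases hLf : L.flatten with _ | ⟨a, t⟩
      · rw [hLf, List.append_nil] at hL
        exact FSword_injective hL ▸ hXg
      · have hv := ih (u := ⟨a, t⟩) hLf.symm fun z hz => hLC z (List.mem_cons_of_mem _ hz)
        have hu : u = X g * ⟨a, t⟩ := FSword_injective (by rw [hL, hLf]; rfl)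
        exact hu ▸ Subsemigroup.mul_mem _ hXg hv

lemma conGen_defRel_le_syntacticCon {S : Type*} [Semigroup S] {X : S → FreeSemigroup (Fin 2)}
    (hX : OverlapProp (codeLanguage X : Set (List (Fin 2)))) :
    conGen (defRel X) ≤ Language.syntacticCon (codeLanguage X)∗ := by
  refine Con.conGen_le.2 ?_
  rintro x y ⟨h, h', h'', -, rfl, rfl⟩ A B
  have hne := nil_notMem_codeLanguage X
  have hw : ∀ g, FSword (X g) ∈ codeLanguage X := fun g => ⟨g, rfl⟩
  have hsplit : A ++ (FSword (X h') ++ FSword (X h'')) ++ B =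
      A ++ FSword (X h') ++ ([] ++ FSword (X h'') ++ B) := by simp
  rw [FSword_mul, hsplit, hX.append_append_mem_kstar_iff hne (hw h),
    hX.append_append_mem_kstar_iff hne (hw h'), hX.append_append_mem_kstar_iff hne (hw h'')]
  simp [Language.nil_mem_kstar]

end

theorem stmt12_general {S : Type*} [Semigroup S] (M : Set (List (Fin 2))) (hM : OverlapProp M)
    (X : S → FreeSemigroup (Fin 2))
    (hmem : ∀ g : S, FSword (X g) ∈ M)
    (W U : FreeSemigroup (Fin 2))
    (hU : U ∈ Subsemigroup.closure (Set.range X))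
    (hWU : conGen (defRel X) W U) :
    W ∈ Subsemigroup.closure (Set.range X) := by
  have hξ := conGen_defRel_le_syntacticCon (hM.mono (Set.range_subset_iff.2 hmem)) hWU [] []
  rw [mem_closure_range_iff_FSword_mem_kstar] at hU ⊢
  simpa using hξ.2 (by simpa using hU)

/-- with `ξ` the congruence generated by the defining relations and `H_S` the
subsemigroup of `F(b₁,b₂)` generated by `{X_g}`, any word `W` that is `ξ`-congruent to a word
`U ∈ H_S` itself lies in `H_S`. -/
theorem stmt12 {S : Type*} [Semigroup S] (M : Set (List (Fin 2))) (hM : OverlapProp M)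
    (hne : [] ∉ M) (X : S → FreeSemigroup (Fin 2)) (hinj : Function.Injective X)
    (hmem : ∀ g : S, FSword (X g) ∈ M)
    (W U : FreeSemigroup (Fin 2))
    (hU : U ∈ Subsemigroup.closure (Set.range X))
    (hWU : conGen (defRel X) W U) :
    W ∈ Subsemigroup.closure (Set.range X) :=
  stmt12_general M hM X hmem W U hU hWU
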